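/- arXiv:1312.1149 — 6 statements merged into one kernel-verified Lean document; each statement's English description precedes it below -/
import Mathlib

section
/- Let J_{2n} be the 2n×2n real symmetric tridiagonal matrix with diagonal entries (α_n, α_{n-1}, …, α_1, α_1, …, α_{n-1}, α_n) and off-diagonal entries (√w_{n-1}, √w_{n-2}, …, √w_1, √w_0, √w_1, …, √w_{n-2}, √w_{n-1}), where α_i ∈ ℝ and w_i > 0. Then the characteristic polynomial factors as det(λI − J_{2n}) = {(λ − α_1 − √w_0)·det(E_2) − w_1·det(E_3)} · {(λ − α_1 + √w_0)·det(E_2) − w_1·det(E_3)}, where E_k is the (n−k+1)×(n−k+1) tridiagonal matrix with diagonal (λ−α_n, λ−α_{n-1}, …, λ−α_k) and off-diagonal entries (−√w_{n-1}, …, −√w_k). -/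
/-!
Listing the second half of the indices in reverse order turns `λI - J_{2n}` into the block matrix
`[[A, C], [C, A]]`, where `A = E_1` and `C` has the single entry `-√w_0` in its bottom-right
corner; such a matrix has determinant `det (A + C) * det (A - C)`. Both `A ± C` are tridiagonal
with bottom-right entry `λ - α_1 ∓ √w_0`, and expanding along the last row gives each factor.
-/

/-- The `2n × 2n` mirror-symmetric Jacobi matrix with diagonal
`(α_n, …, α_1, α_1, …, α_n)` and off-diagonal couplings
`(√w_{n-1}, …, √w_1, √w_0, √w_1, …, √w_{n-1})` (0-based indices). -/
noncomputable def Jmat (α w : ℕ → ℝ) (n : ℕ) : Matrix (Fin (2*n)) (Fin (2*n)) ℝ :=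
  Matrix.of fun i j =>
    if i.1 = j.1 then (if i.1 ≤ n - 1 then α (n - i.1) else α (i.1 - n + 1))
    else if i.1 + 1 = j.1 ∨ j.1 + 1 = i.1 then
      Real.sqrt (w (((n : ℤ) - 1 - (min i.1 j.1 : ℤ)).natAbs))
    else 0

/-- The `(n-k+1) × (n-k+1)` tridiagonal matrix `E_k` with diagonal
`(λ-α_n, λ-α_{n-1}, …, λ-α_k)` and off-diagonal entries `(-√w_{n-1}, …, -√w_k)`. -/
noncomputable def Emat (lam : ℝ) (α w : ℕ → ℝ) (n k : ℕ) : Matrix (Fin (n + 1 - k)) (Fin (n + 1 - k)) ℝ :=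
  Matrix.of fun i j =>
    if i.1 = j.1 then lam - α (n - i.1)
    else if i.1 + 1 = j.1 ∨ j.1 + 1 = i.1 then -Real.sqrt (w (n - 1 - min i.1 j.1))
    else 0

namespace Matrix

variable {R : Type*} [CommRing R]

theorem det_fromBlocks_eq_det_add_mul_det_sub {ι : Type*} [Fintype ι] [DecidableEq ι]
    (A C : Matrix ι ι R) :
    (fromBlocks A C C A).det = (A + C).det * (A - C).det := by
  have h : fromBlocks 1 0 (-1) 1 * fromBlocks A C C A * fromBlocks 1 0 1 1 =
      fromBlocks (A + C) C 0 (A - C) := by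
    simp only [fromBlocks_multiply, Matrix.one_mul, Matrix.zero_mul, Matrix.mul_one,
      Matrix.mul_zero, Matrix.neg_mul, add_zero, zero_add]
    congr 1 <;> abel
  simpa [det_fromBlocks_zero₁₂, det_fromBlocks_zero₂₁] using congrArg det h

theorem det_succ_of_last_col_eq_zero {k : ℕ} (M : Matrix (Fin (k + 1)) (Fin (k + 1)) R)
    (hM : ∀ i : Fin k, M i.castSucc (Fin.last k) = 0) :
    M.det = M (Fin.last k) (Fin.last k) * (M.submatrix Fin.castSucc Fin.castSucc).det := by
  rw [det_succ_column M (Fin.last k), Fin.sum_univ_castSucc,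
    Finset.sum_eq_zero fun i _ => by rw [hM i, mul_zero, zero_mul]]
  simp [Fin.succAbove_last]

theorem det_succ_succ_of_last_row_col_eq_zero {m : ℕ} (T : Matrix (Fin (m + 2)) (Fin (m + 2)) R)
    (hrow : ∀ j : Fin m, T (Fin.last (m + 1)) j.castSucc.castSucc = 0)
    (hcol : ∀ i : Fin m, T i.castSucc.castSucc (Fin.last (m + 1)) = 0) :
    T.det =
      T (Fin.last (m + 1)) (Fin.last (m + 1)) * (T.submatrix Fin.castSucc Fin.castSucc).det -
      T (Fin.last (m + 1)) (Fin.last m).castSucc * T (Fin.last m).castSucc (Fin.last (m + 1)) *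
        (T.submatrix (Fin.castSucc ∘ Fin.castSucc) (Fin.castSucc ∘ Fin.castSucc)).det := by
  have hcols : (Fin.last m).castSucc.succAbove ∘ Fin.castSucc = Fin.castSucc ∘ Fin.castSucc :=
    funext fun j => Fin.succAbove_castSucc_of_lt _ _ (Fin.castSucc_lt_last j)
  have hminor := det_succ_of_last_col_eq_zero
    (T.submatrix Fin.castSucc (Fin.last m).castSucc.succAbove) (by simpa using hcol)
  rw [det_succ_row T (Fin.last (m + 1)), Fin.sum_univ_castSucc, Fin.sum_univ_castSucc,
    Finset.sum_eq_zero fun j _ => by rw [hrow j, mul_zero, zero_mul], Fin.succAbove_last,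
    hminor]
  simp [submatrix_submatrix, hcols]
  ring

end Matrix

open Matrix

/-- `E_1` (the upper-left `n × n` block of `λI - J_{2n}`), indexed by `Fin n` rather than
`Fin (n + 1 - 1)`. -/
noncomputable def jacobiHalf (lam : ℝ) (α w : ℕ → ℝ) (n : ℕ) : Matrix (Fin n) (Fin n) ℝ :=
  of fun i j =>
    if i.1 = j.1 then lam - α (n - i.1)
    else if i.1 + 1 = j.1 ∨ j.1 + 1 = i.1 then -√(w (n - 1 - min i.1 j.1))
    else 0

def mirrorSumEquiv (n : ℕ) : Fin n ⊕ Fin n ≃ Fin (2 * n) :=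
  (Equiv.sumCongr (Equiv.refl _) Fin.revPerm).trans
    (finSumFinEquiv.trans (finCongr (two_mul n).symm))

@[simp]
theorem mirrorSumEquiv_inl_val {n : ℕ} (i : Fin n) : (mirrorSumEquiv n (.inl i) : ℕ) = i := by
  simp [mirrorSumEquiv]

@[simp]
theorem mirrorSumEquiv_inr_val {n : ℕ} (i : Fin n) :
    (mirrorSumEquiv n (.inr i) : ℕ) = 2 * n - 1 - i := by
  simp [mirrorSumEquiv, Fin.rev]
  omega

theorem charMatrix_Jmat_submatrix_mirrorSumEquiv (lam : ℝ) (α w : ℕ → ℝ) (n : ℕ) :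
    (lam • (1 : Matrix (Fin (2 * (n + 1))) (Fin (2 * (n + 1))) ℝ) - Jmat α w (n + 1)).submatrix
        (mirrorSumEquiv (n + 1)) (mirrorSumEquiv (n + 1)) =
      fromBlocks (jacobiHalf lam α w (n + 1)) (single (Fin.last n) (Fin.last n) (-√(w 0)))
        (single (Fin.last n) (Fin.last n) (-√(w 0))) (jacobiHalf lam α w (n + 1)) := by
  have hα : ∀ a b : ℕ, a = b → lam * 1 - α a = lam - α b := by rintro _ _ rfl; ring
  have hsqrt : ∀ a b : ℕ, a = b → lam * 0 - √(w a) = -√(w b) := by rintro _ _ rfl; ring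
  ext (i | i) (j | j) <;>
  · have hi := i.2
    have hj := j.2
    simp only [submatrix_apply, fromBlocks_apply₁₁, fromBlocks_apply₁₂, fromBlocks_apply₂₁,
      fromBlocks_apply₂₂, Matrix.sub_apply, Matrix.smul_apply, smul_eq_mul, one_apply, Jmat,
      jacobiHalf, single, of_apply, Fin.ext_iff, Fin.val_last, mirrorSumEquiv_inl_val,
      mirrorSumEquiv_inr_val]
    split_ifs <;>
      first | ring1 | (exfalso; omega) | exact hα _ _ (by omega) | exact hsqrt _ _ (by omega)

theorem det_jacobiHalf_add_single (lam d : ℝ) (α w : ℕ → ℝ) (m : ℕ) (hw1 : 0 ≤ w 1) :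
    (jacobiHalf lam α w (m + 2) + single (Fin.last (m + 1)) (Fin.last (m + 1)) d).det =
      (lam - α 1 + d) * (Emat lam α w (m + 2) 2).det - w 1 * (Emat lam α w (m + 2) 3).det := by
  set T := jacobiHalf lam α w (m + 2) + single (Fin.last (m + 1)) (Fin.last (m + 1)) d
  have hT : ∀ i j, T i j = (if i.1 = j.1 then lam - α (m + 2 - i.1)
      else if i.1 + 1 = j.1 ∨ j.1 + 1 = i.1 then -√(w (m + 2 - 1 - min i.1 j.1)) else 0) +
      if i.1 = m + 1 ∧ j.1 = m + 1 then d else 0 := by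
    intro i j
    simp [T, jacobiHalf, single, Fin.ext_iff, eq_comm]
  have hrow : ∀ j : Fin m, T (Fin.last (m + 1)) j.castSucc.castSucc = 0 := fun j => by
    have := j.2
    rw [hT]; simp only [Fin.val_last, Fin.val_castSucc]; split_ifs <;> first | ring1 | omega
  have hcol : ∀ i : Fin m, T i.castSucc.castSucc (Fin.last (m + 1)) = 0 := fun i => by
    have := i.2
    rw [hT]; simp only [Fin.val_last, Fin.val_castSucc]; split_ifs <;> first | ring1 | omega
  have hE2 : T.submatrix Fin.castSucc Fin.castSucc = Emat lam α w (m + 2) 2 := by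
    ext i j
    have := i.2; have := j.2
    rw [submatrix_apply, hT]; simp only [Emat, of_apply, Fin.val_castSucc]
    split_ifs <;> first | ring1 | omega
  have hE3 : T.submatrix (Fin.castSucc ∘ Fin.castSucc) (Fin.castSucc ∘ Fin.castSucc) =
      Emat lam α w (m + 2) 3 := by
    ext i j
    have := i.2; have := j.2
    rw [submatrix_apply, hT]; simp only [Emat, of_apply, Function.comp_apply, Fin.val_castSucc]
    split_ifs <;> first | ring1 | omega
  have hll : T (Fin.last (m + 1)) (Fin.last (m + 1)) = lam - α 1 + d := by
    simp [hT, show m + 2 - (m + 1) = 1 by omega]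
  have hlc : T (Fin.last (m + 1)) (Fin.last m).castSucc = -√(w 1) := by
    simp [hT]
  have hcl : T (Fin.last m).castSucc (Fin.last (m + 1)) = -√(w 1) := by
    simp [hT]
  rw [det_succ_succ_of_last_row_col_eq_zero T hrow hcol, hll, hlc, hcl, hE2, hE3, neg_mul_neg,
    Real.mul_self_sqrt hw1]

/-- Determinantal factorization of the characteristic polynomial of the
mirror-symmetric Jacobi matrix `J_{2n}`. -/
theorem det_charpoly_factorization
    (n : ℕ) (hn : 2 ≤ n) (α w : ℕ → ℝ) (hw : ∀ i, i < n → 0 < w i) (lam : ℝ) :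
    (lam • (1 : Matrix (Fin (2*n)) (Fin (2*n)) ℝ) - Jmat α w n).det =
      ((lam - α 1 - Real.sqrt (w 0)) * (Emat lam α w n 2).det
          - w 1 * (Emat lam α w n 3).det) *
      ((lam - α 1 + Real.sqrt (w 0)) * (Emat lam α w n 2).det
          - w 1 * (Emat lam α w n 3).det) := by
  obtain ⟨m, rfl⟩ : ∃ m, n = m + 2 := ⟨n - 2, by omega⟩
  have hw1 : 0 ≤ w 1 := (hw 1 (by omega)).le
  rw [← det_submatrix_equiv_self (mirrorSumEquiv (m + 2)),
    charMatrix_Jmat_submatrix_mirrorSumEquiv, det_fromBlocks_eq_det_add_mul_det_sub, sub_eq_add_neg,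
    single_neg, det_jacobiHalf_add_single _ _ _ _ _ hw1,
    det_jacobiHalf_add_single _ _ _ _ _ hw1, neg_neg, ← sub_eq_add_neg]
end

section
/- With the notation of the symmetric Jacobi matrix J_{2n}: if λ satisfies (λ − α_1 − √w_0)·det(E_2) − w_1·det(E_3) = 0, then the vector v with components v_j = det(E_{n-j+2})/√(w_{n-j+1}⋯w_{n-1}) for j = 1,…,n (interpreting det(E_{n+1}) = 1 and the empty product as 1) and v_{2n+1-j} = v_j for j = 1,…,n, is an eigenvector of J_{2n} with eigenvalue λ. -/
/-- The candidate eigenvector of `J_{2n}`: components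
`v_j = det(E_{n-j+2}) / √(w_{n-j+1} ⋯ w_{n-1})` for `j = 1, …, n` (here 0-based),
reflected with sign `s` on the second half. -/
noncomputable def vsym (lam : ℝ) (α w : ℕ → ℝ) (n : ℕ) (s : ℝ) : Fin (2*n) → ℝ := fun j =>
  if j.1 < n then
    (Emat lam α w n (n - j.1 + 1)).det / Real.sqrt (∏ m ∈ Finset.Ico (n - j.1) n, w m)
  else
    s * ((Emat lam α w n (n - (2*n - 1 - j.1) + 1)).det /
      Real.sqrt (∏ m ∈ Finset.Ico (n - (2*n - 1 - j.1)) n, w m))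

open Matrix

section Tridiagonal

variable {R : Type*} [CommRing R]

def tridiag (d e : ℕ → R) (m : ℕ) : Matrix (Fin m) (Fin m) R :=
  Matrix.of fun i j => if i.1 = j.1 then d i.1
    else if i.1 + 1 = j.1 ∨ j.1 + 1 = i.1 then e (min i.1 j.1) else 0

lemma tridiag_submatrix_succ (d e : ℕ → R) (m : ℕ) :
    (tridiag d e (m + 1)).submatrix Fin.succ Fin.succ
      = tridiag (fun i => d (i + 1)) (fun i => e (i + 1)) m := by
  ext i j
  simp only [tridiag, submatrix_apply, of_apply, Fin.val_succ, Nat.add_right_cancel_iff,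
    Nat.succ_min_succ]

lemma det_tridiag_succ_succ (d e : ℕ → R) (m : ℕ) :
    (tridiag d e (m + 2)).det
      = d 0 * (tridiag (fun i => d (i + 1)) (fun i => e (i + 1)) (m + 1)).det
        - e 0 ^ 2 * (tridiag (fun i => d (i + 2)) (fun i => e (i + 2)) m).det := by
  have hminor : ((tridiag d e (m + 2)).submatrix Fin.succ (Fin.succAbove 1)).det
      = e 0 * (tridiag (fun i => d (i + 2)) (fun i => e (i + 2)) m).det := by
    have hsub : ((tridiag d e (m + 2)).submatrix Fin.succ (Fin.succAbove 1)).submatrix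
        (Fin.succAbove 0) Fin.succ
          = (((tridiag d e (m + 2)).submatrix Fin.succ Fin.succ).submatrix Fin.succ Fin.succ) :=
      rfl
    rw [det_succ_column_zero, Fin.sum_univ_succ, Fintype.sum_eq_zero _ fun i => ?_, hsub,
      tridiag_submatrix_succ, tridiag_submatrix_succ]
    · simp [tridiag]
    · simp [tridiag]
  have h00 : tridiag d e (m + 2) 0 0 = d 0 := by simp [tridiag]
  have h01 : tridiag d e (m + 2) 0 1 = e 0 := by simp [tridiag]
  rw [det_succ_row_zero, Fin.sum_univ_succ, Fin.sum_univ_succ,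
    Fintype.sum_eq_zero _ fun j => ?_, Fin.succAbove_zero, tridiag_submatrix_succ,
    Fin.succ_zero_eq_one, hminor, h00, h01, Fin.val_zero, Fin.val_one]
  · ring
  · simp [tridiag]

end Tridiagonal

section Emat

variable (lam : ℝ) (α w : ℕ → ℝ) (n : ℕ)

lemma det_Emat_eq_det_tridiag (k N : ℕ) (h : n + 1 - k = N) :
    (Emat lam α w n k).det
      = (tridiag (fun i => lam - α (k + i)) (fun i => -√(w (k + i))) N).det := by
  subst h
  rw [← det_submatrix_equiv_self Fin.revPerm (Emat lam α w n k)]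
  congr 1
  ext i j
  have := i.2
  have := j.2
  simp only [submatrix_apply, Emat, tridiag, of_apply, Fin.revPerm_apply, Fin.val_rev]
  split_ifs <;> first | rfl | omega | (congr 2; omega) | (congr 3; omega)

lemma det_Emat_succ_self : (Emat lam α w n (n + 1)).det = 1 := by
  rw [det_Emat_eq_det_tridiag lam α w n (n + 1) 0 (by omega), det_fin_zero]

lemma det_Emat_self : (Emat lam α w n n).det = lam - α n := by
  rw [det_Emat_eq_det_tridiag lam α w n n 1 (by omega), det_fin_one]
  simp [tridiag]

lemma det_Emat_eq_sub {k : ℕ} (hk : k < n) (hwk : 0 ≤ w k) :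
    (Emat lam α w n k).det
      = (lam - α k) * (Emat lam α w n (k + 1)).det - w k * (Emat lam α w n (k + 2)).det := by
  rw [det_Emat_eq_det_tridiag lam α w n k (n - 1 - k + 2) (by omega), det_tridiag_succ_succ,
    det_Emat_eq_det_tridiag lam α w n (k + 1) (n - 1 - k + 1) (by omega),
    det_Emat_eq_det_tridiag lam α w n (k + 2) (n - 1 - k) (by omega)]
  simp only [add_zero, neg_sq, Real.sq_sqrt hwk,
    show ∀ i j, k + (i + j) = k + j + i from fun _ _ => by omega]

end Emat

section Banded

variable {R : Type*} [NonUnitalNonAssocSemiring R] {m : ℕ}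

lemma mulVec_apply_of_tridiagonal {M : Matrix (Fin m) (Fin m) R}
    (hM : ∀ i j : Fin m, i.1 + 1 < j.1 ∨ j.1 + 1 < i.1 → M i j = 0) (v : Fin m → R)
    {i j k : Fin m} (hij : i.1 + 1 = j.1) (hjk : j.1 + 1 = k.1) :
    (M *ᵥ v) j = M j i * v i + M j j * v j + M j k * v k := by
  have hne : i ≠ j ∧ i ≠ k ∧ j ≠ k := by simp only [ne_eq, Fin.ext_iff]; omega
  rw [mulVec, dotProduct, ← Finset.sum_subset (Finset.subset_univ {i, j, k}) fun x _ hx => ?_,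
    Finset.sum_insert (by simp [hne.1, hne.2.1]), Finset.sum_pair hne.2.2, add_assoc]
  simp only [Finset.mem_insert, Finset.mem_singleton, not_or, Fin.ext_iff] at hx
  rw [hM j x (by omega), zero_mul]

lemma mulVec_apply_of_tridiagonal_of_val_eq_zero {M : Matrix (Fin m) (Fin m) R}
    (hM : ∀ i j : Fin m, i.1 + 1 < j.1 ∨ j.1 + 1 < i.1 → M i j = 0) (v : Fin m → R)
    {i j : Fin m} (hi : i.1 = 0) (hij : i.1 + 1 = j.1) :
    (M *ᵥ v) i = M i i * v i + M i j * v j := by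
  rw [mulVec, dotProduct]
  refine Fintype.sum_eq_add i j (by simp only [ne_eq, Fin.ext_iff]; omega) fun x hx => ?_
  simp only [ne_eq, Fin.ext_iff] at hx
  rw [hM i x (by omega), zero_mul]

lemma mulVec_apply_rev {M : Matrix (Fin m) (Fin m) R} {v : Fin m → R}
    (hM : M.submatrix Fin.rev Fin.rev = M) (hv : ∀ i, v i.rev = v i) (i : Fin m) :
    (M *ᵥ v) i.rev = (M *ᵥ v) i := by
  have hv' : v ∘ Fin.revPerm = v := funext hv
  conv_rhs => rw [← hM, ← hv']
  rw [show (Fin.rev : Fin m → Fin m) = Fin.revPerm from rfl, submatrix_mulVec_equiv]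
  simp [Function.comp_def]

end Banded

section Jmat

variable (α w : ℕ → ℝ) (n : ℕ)

lemma Jmat_apply_eq_zero {i j : Fin (2 * n)} (h : i.1 + 1 < j.1 ∨ j.1 + 1 < i.1) :
    Jmat α w n i j = 0 := by
  simp only [Jmat, of_apply]
  rw [if_neg (by omega), if_neg (by omega)]

lemma Jmat_apply_self {i : Fin (2 * n)} {k : ℕ} (hk0 : 0 < k) (hk : i.1 + k = n) :
    Jmat α w n i i = α k := by
  simp only [Jmat, of_apply]
  rw [if_pos trivial, if_pos (by omega)]
  congr 1
  omega

lemma Jmat_apply_of_succ_eq {i j : Fin (2 * n)} {k : ℕ} (h : i.1 + 1 = j.1)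
    (hk : i.1 + k + 1 = n) :
    Jmat α w n i j = √(w k) := by
  simp only [Jmat, of_apply]
  rw [if_neg (by omega), if_pos (by omega)]
  congr 2
  omega

lemma Jmat_apply_of_eq_succ {i j : Fin (2 * n)} {k : ℕ} (h : j.1 + 1 = i.1) (hk : i.1 + k = n) :
    Jmat α w n i j = √(w k) := by
  simp only [Jmat, of_apply]
  rw [if_neg (by omega), if_pos (by omega)]
  congr 2
  omega

lemma Jmat_submatrix_rev : (Jmat α w n).submatrix Fin.rev Fin.rev = Jmat α w n := by
  ext i j
  have := i.2
  have := j.2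
  simp only [Jmat, submatrix_apply, of_apply, Fin.val_rev]
  split_ifs <;> first | rfl | omega | (congr 1; omega) | (congr 2; omega)

end Jmat

section Eigenvector

variable (lam : ℝ) (α w : ℕ → ℝ) (n : ℕ)

noncomputable def vhalf (k : ℕ) : ℝ :=
  (Emat lam α w n (k + 1)).det / √(∏ m ∈ Finset.Ico k n, w m)

lemma vsym_apply_of_lt {i : Fin (2 * n)} {k : ℕ} (hk0 : 0 < k) (hk : i.1 + k = n) :
    vsym lam α w n 1 i = vhalf lam α w n k := by
  rw [vsym, if_pos (by omega), vhalf, show n - i.1 = k by omega]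

lemma vsym_apply_of_le {i : Fin (2 * n)} {k : ℕ} (hk0 : 0 < k) (hk : i.1 + 1 = n + k) :
    vsym lam α w n 1 i = vhalf lam α w n k := by
  rw [vsym, if_neg (by omega), one_mul, vhalf, show n - (2 * n - 1 - i.1) = k by omega]

lemma vsym_apply_rev (i : Fin (2 * n)) : vsym lam α w n 1 i.rev = vsym lam α w n 1 i := by
  have hrev := Fin.val_rev i
  rcases lt_or_ge i.1 n with hi | hi
  · rw [vsym_apply_of_le lam α w n (k := n - i.1) (by omega) (by omega),
      vsym_apply_of_lt lam α w n (k := n - i.1) (by omega) (by omega)]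
  · rw [vsym_apply_of_lt lam α w n (k := i.1 + 1 - n) (by omega) (by omega),
      vsym_apply_of_le lam α w n (k := i.1 + 1 - n) (by omega) (by omega)]

lemma vhalf_self : vhalf lam α w n n = 1 := by
  simp [vhalf, det_Emat_succ_self]

variable {w n}

lemma sqrt_prod_Ico_pos (hw : ∀ i, i < n → 0 < w i) (k : ℕ) :
    0 < √(∏ m ∈ Finset.Ico k n, w m) :=
  Real.sqrt_pos.mpr (Finset.prod_pos fun m hm => hw m (Finset.mem_Ico.mp hm).2)

lemma sqrt_prod_Ico_eq_mul {k : ℕ} (hk : k < n) (hwk : 0 ≤ w k) :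
    √(∏ m ∈ Finset.Ico k n, w m) = √(w k) * √(∏ m ∈ Finset.Ico (k + 1) n, w m) := by
  rw [Finset.prod_eq_prod_Ico_succ_bot hk, Real.sqrt_mul hwk]

lemma vhalf_top_row (hw : ∀ i, i < n → 0 < w i) (hn : 0 < n) :
    α n * vhalf lam α w n n + √(w (n - 1)) * vhalf lam α w n (n - 1)
      = lam * vhalf lam α w n n := by
  have hwn := Real.sqrt_pos.mpr (hw (n - 1) (by omega))
  rw [vhalf_self, vhalf, sqrt_prod_Ico_eq_mul (by omega) (hw (n - 1) (by omega)).le,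
    Nat.sub_add_cancel hn, det_Emat_self, Finset.Ico_self, Finset.prod_empty, Real.sqrt_one,
    mul_one]
  field_simp
  ring

lemma vhalf_interior_row (hw : ∀ i, i < n → 0 < w i) {k : ℕ} (hk0 : 0 < k) (hk : k < n) :
    √(w k) * vhalf lam α w n (k + 1) + α k * vhalf lam α w n k
      + √(w (k - 1)) * vhalf lam α w n (k - 1) = lam * vhalf lam α w n k := by
  obtain ⟨k, rfl⟩ := Nat.exists_eq_add_of_lt hk0
  rw [zero_add, Nat.add_sub_cancel]
  have hp := sqrt_prod_Ico_pos hw (k + 2)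
  have ha := Real.sqrt_pos.mpr (hw (k + 1) (by omega))
  have hb := Real.sqrt_pos.mpr (hw k (by omega))
  have hrec := det_Emat_eq_sub lam α w n (k := k + 1) (by omega) (hw (k + 1) (by omega)).le
  rw [← Real.sq_sqrt (hw (k + 1) (by omega)).le] at hrec
  rw [vhalf, vhalf, vhalf, sqrt_prod_Ico_eq_mul (by omega) (hw k (by omega)).le,
    sqrt_prod_Ico_eq_mul (by omega) (hw (k + 1) (by omega)).le, hrec]
  field_simp
  ring

lemma vhalf_middle_row (hw : ∀ i, i < n → 0 < w i) (hn : 2 ≤ n)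
    (hcond : (lam - α 1 - √(w 0)) * (Emat lam α w n 2).det
      - w 1 * (Emat lam α w n 3).det = 0) :
    √(w 1) * vhalf lam α w n 2 + α 1 * vhalf lam α w n 1 + √(w 0) * vhalf lam α w n 1
      = lam * vhalf lam α w n 1 := by
  have hp := sqrt_prod_Ico_pos hw 2
  have ha := Real.sqrt_pos.mpr (hw 1 (by omega))
  rw [← Real.sq_sqrt (hw 1 (by omega)).le] at hcond
  rw [vhalf, vhalf, sqrt_prod_Ico_eq_mul (k := 1) (by omega) (hw 1 (by omega)).le]
  field_simp
  linear_combination (-1 : ℝ) * hcond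

lemma Jmat_mulVec_vsym_apply_of_lt (hn : 2 ≤ n) (hw : ∀ i, i < n → 0 < w i)
    (hcond : (lam - α 1 - √(w 0)) * (Emat lam α w n 2).det - w 1 * (Emat lam α w n 3).det = 0)
    {i : Fin (2 * n)} (hi : i.1 < n) :
    (Jmat α w n *ᵥ vsym lam α w n 1) i = lam * vsym lam α w n 1 i := by
  have hband : ∀ i j : Fin (2 * n), i.1 + 1 < j.1 ∨ j.1 + 1 < i.1 → Jmat α w n i j = 0 :=
    fun _ _ => Jmat_apply_eq_zero α w n
  rcases (show i.1 = 0 ∨ (0 < i.1 ∧ i.1 + 1 < n) ∨ i.1 + 1 = n by omega) with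
    htop | ⟨hpos, hlt⟩ | hmid
  · rw [mulVec_apply_of_tridiagonal_of_val_eq_zero hband _ (j := ⟨i.1 + 1, by omega⟩) htop rfl,
      Jmat_apply_self α w n (k := n) (by omega) (by omega),
      Jmat_apply_of_succ_eq α w n (k := n - 1) rfl (by omega),
      vsym_apply_of_lt lam α w n (k := n) (by omega) (by omega),
      vsym_apply_of_lt lam α w n (k := n - 1) (by omega) (by simp only; omega)]
    exact vhalf_top_row lam α hw (by omega)
  · rw [mulVec_apply_of_tridiagonal hband _ (i := ⟨i.1 - 1, by omega⟩)
        (k := ⟨i.1 + 1, by omega⟩) (by simp only; omega) rfl,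
      Jmat_apply_of_eq_succ α w n (k := n - i.1) (by simp only; omega) (by omega),
      Jmat_apply_self α w n (k := n - i.1) (by omega) (by omega),
      Jmat_apply_of_succ_eq α w n (k := n - i.1 - 1) rfl (by omega),
      vsym_apply_of_lt lam α w n (k := n - i.1 + 1) (by omega) (by simp only; omega),
      vsym_apply_of_lt lam α w n (k := n - i.1) (by omega) (by omega),
      vsym_apply_of_lt lam α w n (k := n - i.1 - 1) (by omega) (by simp only; omega)]
    exact vhalf_interior_row lam α hw (by omega) (by omega)
  · rw [mulVec_apply_of_tridiagonal hband _ (i := ⟨i.1 - 1, by omega⟩)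
        (k := ⟨i.1 + 1, by omega⟩) (by simp only; omega) rfl,
      Jmat_apply_of_eq_succ α w n (k := 1) (by simp only; omega) (by omega),
      Jmat_apply_self α w n (k := 1) (by omega) (by omega),
      Jmat_apply_of_succ_eq α w n (k := 0) rfl (by omega),
      vsym_apply_of_lt lam α w n (k := 2) (by omega) (by simp only; omega),
      vsym_apply_of_lt lam α w n (k := 1) (by omega) (by omega),
      vsym_apply_of_le lam α w n (k := 1) (by omega) (by simp only; omega)]
    exact vhalf_middle_row lam α hw hn hcond

end Eigenvector

/-- If `λ` satisfies `(λ - α_1 - √w_0)·det(E_2) - w_1·det(E_3) = 0`, then the symmetric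
vector `v` is an eigenvector of `J_{2n}` with eigenvalue `λ`. -/
theorem eigenvector_symmetric_branch
    (n : ℕ) (hn : 2 ≤ n) (α w : ℕ → ℝ) (hw : ∀ i, i < n → 0 < w i) (lam : ℝ)
    (hcond : (lam - α 1 - Real.sqrt (w 0)) * (Emat lam α w n 2).det
        - w 1 * (Emat lam α w n 3).det = 0) :
    vsym lam α w n 1 ≠ 0 ∧
    (Jmat α w n).mulVec (vsym lam α w n 1) = lam • vsym lam α w n 1 := by
  refine ⟨fun h => ?_, funext fun i => ?_⟩
  · have h0 := congrFun h ⟨0, by omega⟩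
    rw [vsym_apply_of_lt lam α w n (k := n) (by omega) (by simp only; omega), vhalf_self] at h0
    exact one_ne_zero h0
  rw [Pi.smul_apply, smul_eq_mul]
  rcases lt_or_ge i.1 n with hi | hi
  · exact Jmat_mulVec_vsym_apply_of_lt lam α hn hw hcond hi
  · obtain ⟨j, rfl⟩ := Fin.rev_surjective i
    rw [Fin.val_rev] at hi
    rw [mulVec_apply_rev (Jmat_submatrix_rev α w n) (vsym_apply_rev lam α w n), vsym_apply_rev]
    exact Jmat_mulVec_vsym_apply_of_lt lam α hn hw hcond (by omega)
end

section
/- Let 0 < p < 1, q = 1 − p, and let J_{2n}(p) be the 2n×2n symmetric tridiagonal matrix with zero diagonal, off-diagonal couplings √p at both extreme positions (1,2) and (2n−1,2n), coupling q at the central position (n, n+1), and coupling √(pq) at all other positions. Then λ = 1 and λ = −1 are eigenvalues of J_{2n}(p). -/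
/-- The `2n × 2n` Jacobi matrix `J_{2n}(p)` of the reduced random walk on the path
`P_{2n}`: zero diagonal, couplings `√p` at the extreme positions, `q = 1-p` at the
central position, and `√(pq)` elsewhere (0-based indices). -/
noncomputable def Jp (p : ℝ) (n : ℕ) : Matrix (Fin (2*n)) (Fin (2*n)) ℝ :=
  Matrix.of fun i j =>
    if i.1 + 1 = j.1 ∨ j.1 + 1 = i.1 then
      (if min i.1 j.1 = 0 ∨ min i.1 j.1 = 2*n - 2 then Real.sqrt p
       else if min i.1 j.1 = n - 1 then 1 - p
       else Real.sqrt (p * (1 - p)))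
    else 0

/-!
`J_{2n}(p)` is the symmetrisation `√(P(k,k+1) P(k+1,k))` of the birth–death chain on
`{0, …, 2n-1}` that steps right from `k` with probability `r k = 1, q, p, 0` for `k = 0`,
`0 < k < n`, `n ≤ k < 2n-1`, `k = 2n-1`, and left otherwise. If `π` satisfies detailed balance
`π k r k = π (k+1) (1 - r (k+1))`, then row `k` of the symmetrisation applied to `√π` gives
`(1 - r k) √π k + r k √π k = √π k`, so `√π` is an eigenvector for `1`. The path is bipartite,
so flipping the sign of every other coordinate turns it into an eigenvector for `-1`.
-/

open Matrix

section Jacobi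

variable {R : Type*}

def jacobiMatrix [Zero R] (N : ℕ) (a : ℕ → R) : Matrix (Fin N) (Fin N) R :=
  of fun i j => if i.1 + 1 = j.1 ∨ j.1 + 1 = i.1 then a (min i.1 j.1) else 0

theorem jacobiMatrix_congr [Zero R] {N : ℕ} {a b : ℕ → R} (h : ∀ k, k + 1 < N → a k = b k) :
    jacobiMatrix N a = jacobiMatrix N b := by
  ext i j
  simp only [jacobiMatrix, of_apply]
  split_ifs with hij
  · exact h _ (by omega)
  · rfl

theorem jacobiMatrix_mulVec_apply [Semiring R] (N : ℕ) (a w : ℕ → R) (i : Fin N) :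
    (jacobiMatrix N a *ᵥ fun j => w j) i =
      (if 0 < i.1 then a (i - 1) * w (i - 1) else 0) +
        (if i.1 + 1 < N then a i * w (i + 1) else 0) := by
  have hterm : ∀ j : ℕ, (if i.1 + 1 = j ∨ j + 1 = i.1 then a (min i.1 j) else 0) * w j =
      (if j = i.1 - 1 then if 0 < i.1 then a (i - 1) * w (i - 1) else 0 else 0) +
        (if j = i.1 + 1 then a i * w (i + 1) else 0) := by
    intro j
    split_ifs <;> first
      | (exfalso; omega)
      | (subst_vars; rw [min_eq_left (by omega)]; simp)
      | (subst_vars; rw [min_eq_right (by omega)]; simp)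
      | simp
  simp only [mulVec, dotProduct, jacobiMatrix, of_apply]
  rw [Fin.sum_univ_eq_sum_range
      (fun j => (if i.1 + 1 = j ∨ j + 1 = i.1 then a (min i.1 j) else 0) * w j),
    Finset.sum_congr rfl fun j _ => hterm j, Finset.sum_add_distrib]
  simp only [Finset.sum_ite_eq', Finset.mem_range]
  rw [if_pos (by omega)]

theorem jacobiMatrix_mulVec_alternating [CommRing R] (N : ℕ) (a w : ℕ → R) :
    (jacobiMatrix N a *ᵥ fun j => (-1) ^ j.1 * w j) =
      -fun i => (-1) ^ i.1 * (jacobiMatrix N a *ᵥ fun j => w j) i := by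
  ext i
  have hsucc : (-1 : R) ^ (i.1 + 1) = -(-1) ^ i.1 := by rw [pow_succ, mul_neg_one]
  have hpred : 0 < i.1 → (-1 : R) ^ (i.1 - 1) = -(-1) ^ i.1 := fun hi => by
    obtain ⟨k, hk⟩ := Nat.exists_eq_succ_of_ne_zero hi.ne'
    rw [hk, Nat.succ_sub_one, pow_succ, mul_neg_one, neg_neg]
  rw [Pi.neg_apply, jacobiMatrix_mulVec_apply N a (fun k => (-1) ^ k * w k),
    jacobiMatrix_mulVec_apply]
  split_ifs with h0 hN hN
  · rw [hpred h0, hsucc]; ring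
  · rw [hpred h0]; ring
  · rw [hsucc]; ring
  · simp

end Jacobi

theorem Real.sqrt_mul_mul_sqrt_of_mul_eq {x y z w : ℝ} (hy : 0 ≤ y) (hz : 0 ≤ z)
    (h : x * z = y * w) : √(x * y) * √z = y * √w := by
  rw [← Real.sqrt_mul' _ hz, show x * y * z = y ^ 2 * w by rw [sq, mul_assoc y, ← h]; ring,
    Real.sqrt_mul (sq_nonneg y), Real.sqrt_sq hy]

section BirthDeath

variable {r : ℕ → ℝ}

noncomputable def birthDeathCoupling (r : ℕ → ℝ) (k : ℕ) : ℝ :=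
  √(r k * (1 - r (k + 1)))

noncomputable def stationaryWeight (r : ℕ → ℝ) : ℕ → ℝ
  | 0 => 1
  | k + 1 => stationaryWeight r k * r k / (1 - r (k + 1))

theorem stationaryWeight_nonneg (hr : ∀ k, 0 ≤ r k ∧ r k ≤ 1) (k : ℕ) :
    0 ≤ stationaryWeight r k := by
  induction k with
  | zero => exact zero_le_one
  | succ k ih =>
    exact div_nonneg (mul_nonneg ih (hr k).1) (sub_nonneg.2 (hr (k + 1)).2)

theorem mul_stationaryWeight_eq (k : ℕ) (hk : r (k + 1) ≠ 1) :
    r k * stationaryWeight r k = (1 - r (k + 1)) * stationaryWeight r (k + 1) := by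
  rw [stationaryWeight, mul_div_cancel₀ _ (sub_ne_zero.2 hk.symm), mul_comm]

theorem jacobiMatrix_birthDeathCoupling_mulVec_sqrt_stationaryWeight {N : ℕ}
    (hr : ∀ k, 0 ≤ r k ∧ r k ≤ 1) (h0 : r 0 = 1) (hN : r (N - 1) = 0)
    (hr_ne_one : ∀ k, 0 < k → k < N → r k ≠ 1) :
    (jacobiMatrix N (birthDeathCoupling r) *ᵥ fun i => √(stationaryWeight r i)) =
      fun i : Fin N => √(stationaryWeight r i) := by
  ext i
  have hπ := stationaryWeight_nonneg hr
  have hleft : (if 0 < i.1 then birthDeathCoupling r (i - 1) * √(stationaryWeight r (i - 1))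
      else 0) = (1 - r i) * √(stationaryWeight r i) := by
    split_ifs with hi
    · obtain ⟨k, hk⟩ := Nat.exists_eq_succ_of_ne_zero hi.ne'
      rw [hk, Nat.succ_sub_one]
      exact Real.sqrt_mul_mul_sqrt_of_mul_eq (sub_nonneg.2 (hr _).2) (hπ k)
        (mul_stationaryWeight_eq k (hr_ne_one _ (by omega) (by omega)))
    · rw [show i.1 = 0 by omega, h0, sub_self, zero_mul]
  have hright : (if i.1 + 1 < N then birthDeathCoupling r i * √(stationaryWeight r (i + 1))
      else 0) = r i * √(stationaryWeight r i) := by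
    split_ifs with hi
    · rw [birthDeathCoupling, mul_comm (r i)]
      exact Real.sqrt_mul_mul_sqrt_of_mul_eq (hr _).1 (hπ _)
        (mul_stationaryWeight_eq _ (hr_ne_one _ (by omega) hi)).symm
    · rw [show i.1 = N - 1 by omega, hN, zero_mul]
  rw [jacobiMatrix_mulVec_apply N _ fun k => √(stationaryWeight r k), hleft, hright]
  ring

theorem jacobiMatrix_birthDeathCoupling_eigenvalues_one_negOne {N : ℕ}
    (hr : ∀ k, 0 ≤ r k ∧ r k ≤ 1) (h0 : r 0 = 1) (hN : r (N - 1) = 0)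
    (hr_ne_one : ∀ k, 0 < k → k < N → r k ≠ 1) :
    (∃ v : Fin N → ℝ, v ≠ 0 ∧ jacobiMatrix N (birthDeathCoupling r) *ᵥ v = v) ∧
      (∃ v : Fin N → ℝ, v ≠ 0 ∧ jacobiMatrix N (birthDeathCoupling r) *ᵥ v = -v) := by
  have hNpos : 0 < N := Nat.pos_of_ne_zero fun hN0 => by simp [hN0, h0] at hN
  have heig := jacobiMatrix_birthDeathCoupling_mulVec_sqrt_stationaryWeight hr h0 hN hr_ne_one
  have hne : ∀ c : ℕ → ℝ, c 0 = 1 → (fun i : Fin N => c i * √(stationaryWeight r i)) ≠ 0 :=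
    fun c hc hzero => by
      simpa [hc, stationaryWeight] using congrFun hzero ⟨0, hNpos⟩
  refine ⟨⟨_, by simpa using hne 1 rfl, heig⟩, ⟨_, hne (fun k => (-1) ^ k) (pow_zero _), ?_⟩⟩
  rw [jacobiMatrix_mulVec_alternating N _ fun k => √(stationaryWeight r k), heig]

end BirthDeath

noncomputable def gluedTreeRate (p : ℝ) (n k : ℕ) : ℝ :=
  if k = 0 then 1 else if k < n then 1 - p else if k < 2 * n - 1 then p else 0

theorem Jp_eq_jacobiMatrix (p : ℝ) (n : ℕ) :
    Jp p n = jacobiMatrix (2 * n) fun k =>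
      if k = 0 ∨ k = 2 * n - 2 then √p else if k = n - 1 then 1 - p else √(p * (1 - p)) :=
  rfl

theorem Jp_eq_jacobiMatrix_birthDeathCoupling {p : ℝ} (hp : p ≤ 1) {n : ℕ} (hn : 2 ≤ n) :
    Jp p n = jacobiMatrix (2 * n) (birthDeathCoupling (gluedTreeRate p n)) := by
  rw [Jp_eq_jacobiMatrix]
  refine jacobiMatrix_congr fun k hk => ?_
  simp only [birthDeathCoupling, gluedTreeRate]
  split_ifs <;> first
    | (exfalso; omega)
    | rfl
    | (rw [← sq, Real.sqrt_sq (by linarith)])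
    | (congr 1; ring)

/-- `λ = 1` and `λ = -1` are eigenvalues of `J_{2n}(p)`. -/
theorem one_and_negOne_eigenvalues
    (p : ℝ) (hp : 0 < p) (hp1 : p < 1) (n : ℕ) (hn : 2 ≤ n) :
    (∃ v : Fin (2*n) → ℝ, v ≠ 0 ∧ (Jp p n).mulVec v = v) ∧
    (∃ v : Fin (2*n) → ℝ, v ≠ 0 ∧ (Jp p n).mulVec v = -v) := by
  rw [Jp_eq_jacobiMatrix_birthDeathCoupling hp1.le hn]
  refine jacobiMatrix_birthDeathCoupling_eigenvalues_one_negOne (fun k => ?_)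
    (by simp [gluedTreeRate]) (by unfold gluedTreeRate; split_ifs <;> first | rfl | omega)
    (fun k hk hkN => ?_)
  · unfold gluedTreeRate
    split_ifs <;> constructor <;> linarith
  · unfold gluedTreeRate
    split_ifs <;> first | omega | (intro h; linarith)
end

section
/- With D_k := det(F_k) satisfying D_k = λD_{k-1} − pq·D_{k-2}, D_0 = 1, D_1 = λ, and E'_k := det of the k×k tridiagonal matrix with diagonal λ, first off-diagonal coupling −√p and remaining couplings −√(pq): one has the identity (λ ∓ q)·E'_{n-1} − pq·E'_{n-2} = (λ ∓ 1)·{D_{n-1} ± p·D_{n-2}} for all n ≥ 3, where p + q = 1. -/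
/-- The sequence `D_k` with `D_0 = 1`, `D_1 = λ`, `D_k = λ·D_{k-1} - c·D_{k-2}`
(`D_k = det(F_k)` when `c = pq`). -/
noncomputable def Dseq (lam c : ℝ) : ℕ → ℝ
  | 0 => 1
  | 1 => lam
  | (k+2) => lam * Dseq lam c (k+1) - c * Dseq lam c k

/-- `E'_k`: determinant of the `k × k` tridiagonal matrix with diagonal `λ`,
first off-diagonal coupling `-√p` and remaining couplings `-√(pq)`; it satisfies
`E'_0 = 1`, `E'_1 = λ`, `E'_k = λ·D_{k-1} - p·D_{k-2}` for `k ≥ 2`. -/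
noncomputable def Ep (p q lam : ℝ) : ℕ → ℝ
  | 0 => 1
  | 1 => lam
  | (k+2) => lam * Dseq lam (p*q) (k+1) - p * Dseq lam (p*q) k

/-! Eliminating `pq·D_{k-1}` between the recursions of `E'_{k+1}` and `D_{k+1}` gives
`q·E'_{k+1} = D_{k+1} - pλ·D_k`, valid also for `k = 0`. Substituting this for `q·E'_{n-2}`
and expanding `E'_{n-1}`, `D_{n-1}` by their recursions, both sides of the identity become
the same linear form in `D_{n-2}` and `D_{n-3}`. -/

theorem one_sub_mul_Ep_succ (p lam : ℝ) (k : ℕ) :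
    (1 - p) * Ep p (1 - p) lam (k + 1)
      = Dseq lam (p * (1 - p)) (k + 1) - p * lam * Dseq lam (p * (1 - p)) k := by
  rcases k with _ | k <;> simp only [Ep, Dseq] <;> ring

theorem Ep_factorization_general
    (p q lam : ℝ) (hq : q = 1 - p) (n : ℕ) (hn : 3 ≤ n) :
    (lam - q) * Ep p q lam (n - 1) - p*q * Ep p q lam (n - 2)
      = (lam - 1) * (Dseq lam (p*q) (n - 1) + p * Dseq lam (p*q) (n - 2)) ∧
    (lam + q) * Ep p q lam (n - 1) - p*q * Ep p q lam (n - 2)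
      = (lam + 1) * (Dseq lam (p*q) (n - 1) - p * Dseq lam (p*q) (n - 2)) := by
  obtain ⟨k, rfl⟩ : ∃ k, n = k + 3 := ⟨n - 3, by omega⟩
  subst hq
  have hE := one_sub_mul_Ep_succ p lam k
  simp only [show k + 3 - 1 = k + 2 by omega, show k + 3 - 2 = k + 1 by omega, Ep.eq_3, Dseq.eq_3]
  constructor <;> linear_combination (-p) * hE

/-- The identity `(λ ∓ q)·E'_{n-1} - pq·E'_{n-2} = (λ ∓ 1)·(D_{n-1} ± p·D_{n-2})`
for all `n ≥ 3`, both sign choices, where `p + q = 1`. -/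
theorem Ep_factorization
    (p q lam : ℝ) (hp : 0 < p) (hp1 : p < 1) (hq : q = 1 - p) (n : ℕ) (hn : 3 ≤ n) :
    (lam - q) * Ep p q lam (n - 1) - p*q * Ep p q lam (n - 2)
      = (lam - 1) * (Dseq lam (p*q) (n - 1) + p * Dseq lam (p*q) (n - 2)) ∧
    (lam + q) * Ep p q lam (n - 1) - p*q * Ep p q lam (n - 2)
      = (lam + 1) * (Dseq lam (p*q) (n - 1) - p * Dseq lam (p*q) (n - 2)) :=
  Ep_factorization_general p q lam hq n hn
end

section
/- For λ = ±1 (with p + q = 1), the determinants D_k = det(F_k) of the k×k tridiagonal matrix with diagonal λ and off-diagonal −√(pq) satisfy: E'_k := λD_{k-1} − pD_{k-2} = (±1)^k q^{k-1} for all k ≥ 1. -/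
/- When `x² - λx + c = (x - a)(x - b)`, the recurrence for `D` peels off the root `a`:
`D_{n+1} - a D_n` is geometric with ratio `b`. -/
theorem Dseq_succ_sub_mul {lam c a b : ℝ} (hlam : a + b = lam) (hc : a * b = c) (n : ℕ) :
    Dseq lam c (n + 1) - a * Dseq lam c n = b ^ (n + 1) := by
  subst hlam hc
  induction n with
  | zero => simp [Dseq]
  | succ n ih =>
    calc Dseq (a + b) (a * b) (n + 2) - a * Dseq (a + b) (a * b) (n + 1)
        = b * (Dseq (a + b) (a * b) (n + 1) - a * Dseq (a + b) (a * b) n) := by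
          rw [Dseq]; ring
      _ = b ^ (n + 2) := by rw [ih]; ring

theorem Ep_of_sq_eq_one {p q σ : ℝ} (hσ : σ ^ 2 = 1) (hpq : p + q = 1) (k : ℕ) :
    Ep p q σ k = σ ^ k * q ^ (k - 1) := by
  match k with
  | 0 | 1 => simp [Ep]
  | n + 2 =>
    have hroots : σ * p + σ * q = σ := by rw [← mul_add, hpq, mul_one]
    have hprod : σ * p * (σ * q) = p * q := by linear_combination p * q * hσ
    have hD := Dseq_succ_sub_mul hroots hprod n
    calc Ep p q σ (n + 2)
        = σ * (Dseq σ (p * q) (n + 1) - σ * p * Dseq σ (p * q) n) := by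
          rw [Ep]; linear_combination p * Dseq σ (p * q) n * hσ
      _ = σ ^ (n + 2) * q ^ (n + 1) := by rw [hD]; ring

theorem Ep_at_pm_one_general
    (p q : ℝ) (hq : q = 1 - p) (k : ℕ) :
    Ep p q 1 k = q^(k - 1) ∧ Ep p q (-1) k = (-1)^k * q^(k - 1) := by
  have hpq : p + q = 1 := by rw [hq]; ring
  constructor
  · simpa using Ep_of_sq_eq_one (one_pow 2) hpq k
  · exact Ep_of_sq_eq_one (by norm_num) hpq k

/-- At `λ = ±1` (with `p + q = 1`): `E'_k = (±1)^k · q^{k-1}` for all `k ≥ 1`. -/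
theorem Ep_at_pm_one
    (p q : ℝ) (hp : 0 < p) (hp1 : p < 1) (hq : q = 1 - p) (k : ℕ) (hk : 1 ≤ k) :
    Ep p q 1 k = q^(k - 1) ∧ Ep p q (-1) k = (-1)^k * q^(k - 1) :=
  Ep_at_pm_one_general p q hq k
end

section
/- The eigenvalues λ of J_{2n}(p) other than ±1 are exactly the solutions of √q·Ũ_{n-1}(λ/√(pq)) + √p·Ũ_{n-2}(λ/√(pq)) = 0 or √q·Ũ_{n-1}(λ/√(pq)) − √p·Ũ_{n-2}(λ/√(pq)) = 0, where Ũ_k denotes the monic Chebyshev polynomial of the second kind. -/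
/-- The monic Chebyshev polynomials of the second kind:
`Ũ_0 = 1`, `Ũ_1(x) = x`, `Ũ_k(x) = x·Ũ_{k-1}(x) - Ũ_{k-2}(x)`. -/
noncomputable def Ut : ℕ → ℝ → ℝ
  | 0, _ => 1
  | 1, x => x
  | (k+2), x => x * Ut (k+1) x - Ut k x

/-- `Ũ` shifted by one: `Ut' k = Ũ_{k-1}` with `Ũ_{-1} = 0`. -/
noncomputable def Ut' (k : ℕ) (x : ℝ) : ℝ := if k = 0 then 0 else Ut (k - 1) x

open Matrix

variable {R : Type*}

def jacobi [Zero R] (N : ℕ) (b : ℕ → R) : Matrix (Fin N) (Fin N) R :=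
  of fun i j => if i.1 + 1 = j.1 ∨ j.1 + 1 = i.1 then b (min i.1 j.1) else 0

section Jacobi

variable [NonUnitalNonAssocSemiring R] {N : ℕ} (b : ℕ → R)

lemma jacobi_mulVec_apply_zero (h : 1 < N) (v : Fin N → R) :
    (jacobi N b *ᵥ v) ⟨0, by omega⟩ = b 0 * v ⟨1, h⟩ := by
  rw [mulVec, dotProduct, Fintype.sum_eq_single ⟨1, h⟩]
  · simp [jacobi]
  · intro j hj
    have : j.1 ≠ 1 := fun h' => hj (Fin.ext h')
    simp only [jacobi, of_apply]
    rw [if_neg (by omega), zero_mul]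

lemma jacobi_mulVec_apply_succ {k : ℕ} (h : k + 2 < N) (v : Fin N → R) :
    (jacobi N b *ᵥ v) ⟨k + 1, by omega⟩ = b k * v ⟨k, by omega⟩ + b (k + 1) * v ⟨k + 2, h⟩ := by
  rw [mulVec, dotProduct, Fintype.sum_eq_add ⟨k, by omega⟩ ⟨k + 2, h⟩ (by simp [Fin.ext_iff])]
  · simp [jacobi]
  · rintro j ⟨hj, hj'⟩
    have : j.1 ≠ k := fun h' => hj (Fin.ext h')
    have : j.1 ≠ k + 2 := fun h' => hj' (Fin.ext h')
    simp only [jacobi, of_apply]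
    rw [if_neg (by omega), zero_mul]

lemma jacobi_apply_rev (hb : ∀ k, k + 2 ≤ N → b (N - 2 - k) = b k) (i j : Fin N) :
    jacobi N b i.rev j.rev = jacobi N b i j := by
  simp only [jacobi, of_apply, Fin.val_rev]
  by_cases hij : i.1 + 1 = j.1 ∨ j.1 + 1 = i.1
  · rw [if_pos (by omega), if_pos hij, ← hb _ (by omega)]
    congr 1
    omega
  · rw [if_neg (by omega), if_neg hij]

end Jacobi

lemma eq_zero_of_jacobi_rows_of_apply_zero [CommRing R] [NoZeroDivisors R] {N m : ℕ} {b : ℕ → R}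
    (hm : m < N) (hb : ∀ k < m, b k ≠ 0) {μ : R} {v : Fin N → R} (hv₀ : v ⟨0, by omega⟩ = 0)
    (hrows : ∀ i : Fin N, i.1 < m → (jacobi N b *ᵥ v) i = μ * v i) :
    ∀ i : Fin N, i.1 ≤ m → v i = 0 := by
  suffices ∀ k (hk : k ≤ m), v ⟨k, by omega⟩ = 0 from fun i hi => this i.1 hi
  intro k
  induction k using Nat.strong_induction_on with
  | _ k ih =>
    intro hk
    match k, ih with
    | 0, _ => exact hv₀
    | 1, _ =>
      have h := hrows ⟨0, by omega⟩ (show 0 < m by omega)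
      rw [jacobi_mulVec_apply_zero b (by omega), hv₀, mul_zero] at h
      exact (mul_eq_zero.mp h).resolve_left (hb 0 (by omega))
    | k + 2, ih =>
      have h := hrows ⟨k + 1, by omega⟩ (show k + 1 < m by omega)
      rw [jacobi_mulVec_apply_succ b (by omega), ih k (by omega) (by omega),
        ih (k + 1) (by omega) (by omega), mul_zero, mul_zero, zero_add] at h
      exact (mul_eq_zero.mp h).resolve_left (hb (k + 1) (by omega))

section Mirror

variable [CommRing R] {N : ℕ} {M : Matrix (Fin N) (Fin N) R}

lemma mulVec_comp_rev (hM : ∀ i j, M i.rev j.rev = M i j) (v : Fin N → R) :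
    M *ᵥ (v ∘ Fin.rev) = (M *ᵥ v) ∘ Fin.rev := by
  ext i
  exact Fintype.sum_equiv Fin.revPerm _ _ fun j => by simp [hM]

theorem exists_eigenvector_iff_exists_mirror (hM : ∀ i j, M i.rev j.rev = M i j) (μ : R) :
    (∃ v, v ≠ 0 ∧ M *ᵥ v = μ • v) ↔
      ∃ ε : R, (ε = 1 ∨ ε = -1) ∧ ∃ v, v ≠ 0 ∧ v ∘ Fin.rev = ε • v ∧ M *ᵥ v = μ • v := by
  refine ⟨fun ⟨v, hv, hMv⟩ => ?_, fun ⟨_, _, v, hv, _, hMv⟩ => ⟨v, hv, hMv⟩⟩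
  by_cases hsym : v + v ∘ Fin.rev = 0
  · refine ⟨-1, Or.inr rfl, v, hv, ?_, hMv⟩
    rw [neg_one_smul]
    exact eq_neg_of_add_eq_zero_right hsym
  · refine ⟨1, Or.inl rfl, v + v ∘ Fin.rev, hsym, ?_, ?_⟩
    · ext i
      simp [add_comm]
    · rw [mulVec_add, mulVec_comp_rev hM, hMv, smul_add]
      rfl

lemma mulVec_eq_smul_of_comp_rev (hM : ∀ i j, M i.rev j.rev = M i j) {ε μ : R}
    {v : Fin N → R} (hv : v ∘ Fin.rev = ε • v)
    (hrows : ∀ i : Fin N, 2 * i.1 < N → (M *ᵥ v) i = μ * v i) : M *ᵥ v = μ • v := by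
  ext i
  by_cases hi : 2 * i.1 < N
  · exact hrows i hi
  · have hMv := congrFun (mulVec_comp_rev hM v) i.rev
    have hvi := congrFun hv i.rev
    simp only [hv, mulVec_smul, Function.comp_apply, Fin.rev_rev, Pi.smul_apply,
      smul_eq_mul] at hMv hvi
    rw [Pi.smul_apply, smul_eq_mul, ← hMv, hrows i.rev (by rw [Fin.val_rev]; omega), hvi]
    ring

lemma eq_zero_of_comp_rev {ε : R} {v : Fin N → R} (hv : v ∘ Fin.rev = ε • v)
    (h : ∀ i : Fin N, 2 * i.1 < N → v i = 0) : v = 0 := by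
  ext i
  by_cases hi : 2 * i.1 < N
  · exact h i hi
  · have hvi := congrFun hv i.rev
    simp only [Function.comp_apply, Fin.rev_rev, Pi.smul_apply, smul_eq_mul] at hvi
    rw [Pi.zero_apply, hvi, h i.rev (by rw [Fin.val_rev]; omega), mul_zero]

def mirrorExtend (n : ℕ) (ε : R) (f : ℕ → R) : Fin (2 * n) → R :=
  fun i => if i.1 < n then f i.1 else ε * f (2 * n - 1 - i.1)

lemma mirrorExtend_comp_rev {n : ℕ} {ε : R} (hε : ε * ε = 1) (f : ℕ → R) :
    mirrorExtend n ε f ∘ Fin.rev = ε • mirrorExtend n ε f := by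
  ext i
  simp only [mirrorExtend, Function.comp_apply, Fin.val_rev, Pi.smul_apply, smul_eq_mul]
  by_cases hi : i.1 < n
  · rw [if_neg (by omega), if_pos hi]
    congr 2
    omega
  · rw [if_pos (by omega), if_neg hi, ← mul_assoc, hε, one_mul]
    congr 1
    omega

end Mirror

lemma Ut_add_two (k : ℕ) (x : ℝ) : Ut (k + 2) x = x * Ut (k + 1) x - Ut k x := rfl

section LeftSolution

variable (s t x : ℝ)

/-- Closed form of the solution `v` with `v 0 = 1` of the first-half rows of `J_{2n}(p) v = λ v`,
where `s = √p`, `t = √q` and `λ = s t x`. -/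
noncomputable def leftSolution : ℕ → ℝ
  | 0 => 1
  | k + 1 => (Ut (k + 1) x - s ^ 2 * x * Ut k x) / t

variable {s t}

lemma mul_leftSolution_one (hst : s ^ 2 + t ^ 2 = 1) (ht : t ≠ 0) :
    s * leftSolution s t x 1 = s * t * x * leftSolution s t x 0 := by
  simp only [leftSolution, Ut]
  field_simp
  linear_combination -(s * x) * hst

lemma leftSolution_recurrence (ht : t ≠ 0) (k : ℕ) :
    (if k = 0 then s else s * t) * leftSolution s t x k + s * t * leftSolution s t x (k + 2)
      = s * t * x * leftSolution s t x (k + 1) := by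
  rcases k with _ | k
  · simp only [leftSolution, Ut, if_true]
    field_simp
    ring
  · simp only [leftSolution, Nat.add_eq_zero_iff, one_ne_zero, and_false, if_false, Ut_add_two]
    field_simp
    ring

lemma leftSolution_middle_factor (hst : s ^ 2 + t ^ 2 = 1) (ht : t ≠ 0) {ε : ℝ} (hε : ε * ε = 1)
    (k : ℕ) :
    s * t * leftSolution s t x (k + 2) - ε * t ^ 2 * leftSolution s t x (k + 1)
      = (s * t * x - ε) * (t * Ut (k + 1) x + ε * s * Ut k x) := by
  simp only [leftSolution, Ut_add_two]
  field_simp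
  linear_combination (-(s * x * Ut (k + 1) x)) * hst + s * Ut k x * hε

end LeftSolution

section Jp

variable (p : ℝ) (n : ℕ)

noncomputable def jpCoupling (k : ℕ) : ℝ :=
  if k = 0 ∨ k = 2 * n - 2 then √p else if k = n - 1 then 1 - p else √(p * (1 - p))

lemma Jp_eq_jacobi : Jp p n = jacobi (2 * n) (jpCoupling p n) := rfl

lemma Jp_apply_rev (i j : Fin (2 * n)) : Jp p n i.rev j.rev = Jp p n i j := by
  rw [Jp_eq_jacobi]
  refine jacobi_apply_rev _ (fun k hk => ?_) i j
  unfold jpCoupling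
  congr 1
  · simp only [eq_iff_iff]; omega
  · congr 1; simp only [eq_iff_iff]; omega

variable {p n}

lemma jpCoupling_of_lt (hp : 0 ≤ p) {k : ℕ} (hk : k + 1 < n) :
    jpCoupling p n k = if k = 0 then √p else √p * √(1 - p) := by
  unfold jpCoupling
  split_ifs <;> first | omega | rfl | exact Real.sqrt_mul hp _

lemma jpCoupling_ne_zero (hp : 0 < p) (hp1 : p < 1) {k : ℕ} (hk : k + 1 < n) :
    jpCoupling p n k ≠ 0 := by
  have hs := Real.sqrt_pos.mpr hp
  have ht := Real.sqrt_pos.mpr (sub_pos.mpr hp1)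
  rw [jpCoupling_of_lt hp.le hk]
  split_ifs <;> positivity

lemma jpCoupling_middle (m : ℕ) : jpCoupling p (m + 2) (m + 1) = 1 - p := by
  unfold jpCoupling
  rw [if_neg (by omega), if_pos (by omega)]

end Jp

section MirrorSolution

variable {p : ℝ} (x : ℝ) {ε : ℝ}

lemma sq_sqrt_add_sq_sqrt_one_sub (hp : 0 ≤ p) (hp1 : p ≤ 1) : √p ^ 2 + √(1 - p) ^ 2 = 1 := by
  rw [Real.sq_sqrt hp, Real.sq_sqrt (by linarith)]
  ring

lemma Jp_mulVec_mirrorExtend_apply_of_lt (hp : 0 < p) (hp1 : p < 1) {n : ℕ} (i : Fin (2 * n))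
    (hi : i.1 + 1 < n) :
    (Jp p n *ᵥ mirrorExtend n ε (leftSolution √p √(1 - p) x)) i
      = √p * √(1 - p) * x * mirrorExtend n ε (leftSolution √p √(1 - p) x) i := by
  have hst := sq_sqrt_add_sq_sqrt_one_sub hp.le hp1.le
  have ht : √(1 - p) ≠ 0 := (Real.sqrt_pos.mpr (by linarith)).ne'
  obtain ⟨_ | k, hk⟩ := i <;> dsimp only at hi
  · rw [Jp_eq_jacobi, jacobi_mulVec_apply_zero _ (by omega), jpCoupling_of_lt hp.le (by omega)]
    simp only [mirrorExtend, if_pos (show 0 < n by omega), if_pos (show 1 < n by omega), if_true]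
    exact mul_leftSolution_one x hst ht
  · rw [Jp_eq_jacobi, jacobi_mulVec_apply_succ _ (by omega),
      jpCoupling_of_lt hp.le (k := k) (by omega), jpCoupling_of_lt hp.le (k := k + 1) (by omega),
      if_neg k.succ_ne_zero]
    simp only [mirrorExtend, if_pos (show k < n by omega), if_pos (show k + 1 < n by omega),
      if_pos (show k + 2 < n by omega)]
    exact leftSolution_recurrence (s := √p) x ht k

lemma Jp_mulVec_mirrorExtend_apply_middle (hp : 0 < p) (hp1 : p < 1) (hε : ε * ε = 1) (m : ℕ) :
    (Jp p (m + 2) *ᵥ mirrorExtend (m + 2) ε (leftSolution √p √(1 - p) x)) ⟨m + 1, by omega⟩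
      - √p * √(1 - p) * x * mirrorExtend (m + 2) ε (leftSolution √p √(1 - p) x) ⟨m + 1, by omega⟩
      = -((√p * √(1 - p) * x - ε) * (√(1 - p) * Ut (m + 1) x + ε * √p * Ut m x)) := by
  have hst := sq_sqrt_add_sq_sqrt_one_sub hp.le hp1.le
  have ht : √(1 - p) ≠ 0 := (Real.sqrt_pos.mpr (by linarith)).ne'
  rw [Jp_eq_jacobi, jacobi_mulVec_apply_succ _ (by omega), jpCoupling_of_lt hp.le (by omega),
    jpCoupling_middle]
  simp only [mirrorExtend, if_pos (show m < m + 2 by omega), if_pos (show m + 1 < m + 2 by omega),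
    if_neg (show ¬ m + 2 < m + 2 by omega), show 2 * (m + 2) - 1 - (m + 2) = m + 1 by omega]
  linear_combination leftSolution_recurrence (s := √p) x ht m
    - leftSolution_middle_factor x hst ht hε m
    + ε * leftSolution √p √(1 - p) x (m + 1) * (Real.sq_sqrt (by linarith : 0 ≤ 1 - p)).symm

end MirrorSolution

lemma eq_smul_mirrorExtend_of_Jp_mulVec_eq_smul {p : ℝ} (hp : 0 < p) (hp1 : p < 1) {m : ℕ}
    (x : ℝ) {ε : ℝ} (hε : ε * ε = 1) {v : Fin (2 * (m + 2)) → ℝ} (hvε : v ∘ Fin.rev = ε • v)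
    (hJv : Jp p (m + 2) *ᵥ v = (√p * √(1 - p) * x) • v) :
    v = v ⟨0, by omega⟩ • mirrorExtend (m + 2) ε (leftSolution √p √(1 - p) x) := by
  have hrows := Jp_mulVec_mirrorExtend_apply_of_lt x hp hp1 (ε := ε) (n := m + 2)
  have hΦ := mirrorExtend_comp_rev (n := m + 2) hε (leftSolution √p √(1 - p) x)
  set Φ := mirrorExtend (m + 2) ε (leftSolution √p √(1 - p) x)
  have hΦ₀ : Φ ⟨0, by omega⟩ = 1 := if_pos (Nat.succ_pos _)
  rw [← sub_eq_zero]
  set d := v - v ⟨0, by omega⟩ • Φ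
  have hdε : d ∘ Fin.rev = ε • d := by
    ext i
    have hvi := congrFun hvε i
    have hΦi := congrFun hΦ i
    simp only [Function.comp_apply, Pi.smul_apply, smul_eq_mul] at hvi hΦi
    simp only [d, Function.comp_apply, Pi.sub_apply, Pi.smul_apply, smul_eq_mul, hvi, hΦi]
    ring
  refine eq_zero_of_comp_rev hdε fun i hi => ?_
  refine eq_zero_of_jacobi_rows_of_apply_zero (m := m + 1) (μ := √p * √(1 - p) * x) (by omega)
    (fun k hk => jpCoupling_ne_zero (n := m + 2) (k := k) hp hp1 (by omega))
    (by simp only [d, Pi.sub_apply, Pi.smul_apply, smul_eq_mul, hΦ₀, mul_one, sub_self])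
    (fun j hj => ?_) i (by omega)
  rw [← Jp_eq_jacobi, mulVec_sub, mulVec_smul, hJv, Pi.sub_apply, Pi.smul_apply,
    Pi.smul_apply, hrows j (by omega)]
  simp only [d, Pi.sub_apply, Pi.smul_apply, smul_eq_mul]
  ring

theorem exists_mirror_eigenvector_Jp_iff {p : ℝ} (hp : 0 < p) (hp1 : p < 1) (m : ℕ) (x : ℝ)
    {ε : ℝ} (hε : ε * ε = 1) :
    (∃ v, v ≠ 0 ∧ v ∘ Fin.rev = ε • v ∧ Jp p (m + 2) *ᵥ v = (√p * √(1 - p) * x) • v) ↔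
      (√p * √(1 - p) * x - ε) * (√(1 - p) * Ut (m + 1) x + ε * √p * Ut m x) = 0 := by
  have hmiddle := Jp_mulVec_mirrorExtend_apply_middle x hp hp1 hε m
  set Φ := mirrorExtend (m + 2) ε (leftSolution √p √(1 - p) x)
  constructor
  · rintro ⟨v, hv, hvε, hJv⟩
    have hvΦ := eq_smul_mirrorExtend_of_Jp_mulVec_eq_smul hp hp1 x hε hvε hJv
    have hv₀ : v ⟨0, by omega⟩ ≠ 0 := fun h => hv (by rw [hvΦ, h, zero_smul])
    have hJv' := congrFun hJv ⟨m + 1, by omega⟩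
    rw [hvΦ, mulVec_smul] at hJv'
    simp only [Pi.smul_apply, smul_eq_mul] at hJv'
    refine (mul_eq_zero.mp (?_ : v ⟨0, by omega⟩ * _ = 0)).resolve_left hv₀
    linear_combination v ⟨0, by omega⟩ * hmiddle - hJv'
  · intro h
    have hΦ₀ : Φ ⟨0, by omega⟩ = 1 := if_pos (Nat.succ_pos _)
    have hΦ := mirrorExtend_comp_rev (n := m + 2) hε (leftSolution √p √(1 - p) x)
    refine ⟨Φ, fun h0 => one_ne_zero (hΦ₀.symm.trans (congrFun h0 _)), hΦ,
      mulVec_eq_smul_of_comp_rev (Jp_apply_rev p _) hΦ fun i hi => ?_⟩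
    by_cases hi' : i.1 + 1 < m + 2
    · exact Jp_mulVec_mirrorExtend_apply_of_lt x hp hp1 i hi'
    · rw [show i = ⟨m + 1, by omega⟩ from Fin.ext (show i.1 = m + 1 by omega)]
      linear_combination hmiddle - h

/-- The eigenvalues of `J_{2n}(p)` other than `±1` are exactly the solutions of
`√q·Ũ_{n-1}(λ/√(pq)) ± √p·Ũ_{n-2}(λ/√(pq)) = 0`. -/
theorem eigenvalues_ne_pm_one_iff
    (p q : ℝ) (hp : 0 < p) (hp1 : p < 1) (hq : q = 1 - p)
    (n : ℕ) (hn : 2 ≤ n) (lam : ℝ) (h1 : lam ≠ 1) (h2 : lam ≠ -1) :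
    (∃ v : Fin (2*n) → ℝ, v ≠ 0 ∧ (Jp p n).mulVec v = lam • v) ↔
      (Real.sqrt q * Ut (n - 1) (lam / Real.sqrt (p*q))
          + Real.sqrt p * Ut (n - 2) (lam / Real.sqrt (p*q)) = 0 ∨
       Real.sqrt q * Ut (n - 1) (lam / Real.sqrt (p*q))
          - Real.sqrt p * Ut (n - 2) (lam / Real.sqrt (p*q)) = 0) := by
  obtain ⟨m, rfl⟩ : ∃ m, n = m + 2 := ⟨n - 2, by omega⟩
  subst hq
  have hlam : lam = √p * √(1 - p) * (lam / √(p * (1 - p))) := by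
    have : √(p * (1 - p)) ≠ 0 := (Real.sqrt_pos.mpr (mul_pos hp (sub_pos.mpr hp1))).ne'
    rw [← Real.sqrt_mul hp.le]
    field_simp
  set x := lam / √(p * (1 - p))
  rw [exists_eigenvector_iff_exists_mirror (Jp_apply_rev p _)]
  simp only [or_and_right, exists_or, exists_eq_left, hlam]
  rw [exists_mirror_eigenvector_Jp_iff hp hp1 m x (by norm_num),
    exists_mirror_eigenvector_Jp_iff hp hp1 m x (by norm_num), ← hlam]
  simp only [show m + 2 - 1 = m + 1 by omega, Nat.add_sub_cancel, mul_eq_zero, sub_eq_zero,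
    h1, h2, false_or, one_mul, neg_mul, ← sub_eq_add_neg]
end
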